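/- arXiv:1505.06098 — 2 statements merged into one kernel-verified Lean document; each statement's English description precedes it below -/
import Mathlib

section
/- There is a bijection between the set of pairs (T, occupied corner of T) where T ranges over tree-like tableaux of size n, and the set of pairs (T', i) where T' is a tree-like tableau of size n-1 and i is an integer in {1, ..., n}. -/
open Polynomial

/-- A tree-like tableau: a Young diagram together with a set of pointed cells,
such that the top-left cell is pointed (the root point), every non-root point
has a point above it in its column or to its left in its row but not both,
and no row or column of the diagram is empty of points. Cells are indexed by
`(row, column)` with the top-left cell `(0,0)`. -/
structure TreeLikeTableau where
  shape : YoungDiagram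
  points : Finset (ℕ × ℕ)
  points_subset : points ⊆ shape.cells
  root_mem : (0, 0) ∈ points
  point_cond : ∀ p ∈ points, p ≠ (0, 0) →
    Xor' (∃ r < p.1, (r, p.2) ∈ points) (∃ c < p.2, (p.1, c) ∈ points)
  no_empty_row : ∀ i j : ℕ, (i, j) ∈ shape.cells → ∃ c, (i, c) ∈ points
  no_empty_col : ∀ i j : ℕ, (i, j) ∈ shape.cells → ∃ r, (r, j) ∈ points

namespace TreeLikeTableau

/-- The size of a tree-like tableau is its number of points. -/
def size (T : TreeLikeTableau) : ℕ := T.points.card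

/-- The occupied corners of a tree-like tableau: pointed cells whose bottom
and right edges lie on the Southeast border of the diagram. -/
def occCorners (T : TreeLikeTableau) : Finset (ℕ × ℕ) :=
  T.points.filter (fun p => (p.1 + 1, p.2) ∉ T.shape.cells ∧ (p.1, p.2 + 1) ∉ T.shape.cells)

/-- The number of occupied corners. -/
def oc (T : TreeLikeTableau) : ℕ := T.occCorners.card

end TreeLikeTableau

/-!
Write `(r, c)` for an occupied corner of a tree-like tableau `T` of size `n ≥ 2`. It is not the
root, so it has a point above it or a point to its left, never both. In the first case nothing
else lies in row `r` (no cell lies right of a corner), and every column keeps a point when row `r`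
is deleted. In the smaller tableau column `c` ends at row `r`, so `T` is recovered by inserting
a row of length `c + 1` below column `c`, with a single point in its last cell. The second case
is the transpose of the first.

The border edges of a diagram with `R` rows and `C` columns are numbered `1, …, R + C`; the
horizontal ones correspond to columns and the vertical ones to rows. Every row has exactly one
point with no point to its left and every column exactly one with no point above it; the root
lacks both kinds of neighbour and every other point exactly one, so `R + C = n + 1`. Hence, for
a tableau of size `n - 1`, inserting a row or a column as above amounts to choosing a border
edge `i ∈ {1, …, n}`.
-/

namespace Nat

def succAbove (r i : ℕ) : ℕ := if i < r then i else i + 1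

variable {r i k : ℕ}

lemma succAbove_of_lt (h : i < r) : succAbove r i = i := if_pos h

lemma strictMono_succAbove (r : ℕ) : StrictMono (succAbove r) := by
  intro a b hab
  unfold succAbove
  split_ifs <;> omega

lemma le_succAbove (r i : ℕ) : i ≤ succAbove r i := by
  unfold succAbove
  split_ifs <;> omega

lemma succAbove_ne (r i : ℕ) : succAbove r i ≠ r := by
  unfold succAbove
  split_ifs <;> omega

lemma self_ne_succAbove (r i : ℕ) : r ≠ succAbove r i := (succAbove_ne r i).symm

lemma succAbove_lt_iff : succAbove r i < r ↔ i < r := by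
  unfold succAbove
  split_ifs <;> omega

lemma succAbove_le_iff : succAbove r i ≤ r ↔ i < r := by
  rw [le_iff_lt_or_eq, or_iff_left (succAbove_ne r i), succAbove_lt_iff]

lemma exists_succAbove_eq (h : k ≠ r) : ∃ i, succAbove r i = k :=
  if hk : k < r then ⟨k, succAbove_of_lt hk⟩
  else ⟨k - 1, by unfold succAbove; split_ifs <;> omega⟩

lemma forall_iff_succAbove (r : ℕ) {P : ℕ → Prop} :
    (∀ k, P k) ↔ P r ∧ ∀ i, P (succAbove r i) := by
  refine ⟨fun h => ⟨h r, fun i => h _⟩, fun ⟨hr, h⟩ k => ?_⟩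
  obtain rfl | hk := eq_or_ne k r
  · exact hr
  · obtain ⟨i, rfl⟩ := exists_succAbove_eq hk
    exact h i

lemma forall_prod_iff_succAbove (r : ℕ) {P : ℕ × ℕ → Prop} :
    (∀ p, P p) ↔ (∀ j, P (r, j)) ∧ ∀ i j, P (succAbove r i, j) := by
  rw [Prod.forall, forall_iff_succAbove r]

end Nat

namespace Finset

noncomputable def eraseRow (s : Finset (ℕ × ℕ)) (r : ℕ) : Finset (ℕ × ℕ) :=
  s.preimage (Prod.map (Nat.succAbove r) id)
    ((Nat.strictMono_succAbove r).injective.prodMap Function.injective_id).injOn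

def insertRow (s : Finset (ℕ × ℕ)) (r : ℕ) (t : Finset ℕ) : Finset (ℕ × ℕ) :=
  s.image (Prod.map (Nat.succAbove r) id) ∪ t.image (Prod.mk r)

variable {s : Finset (ℕ × ℕ)} {r i j : ℕ} {t : Finset ℕ}

@[simp] lemma mem_eraseRow : (i, j) ∈ s.eraseRow r ↔ (Nat.succAbove r i, j) ∈ s := by
  simp [eraseRow]

@[simp] lemma succAbove_mem_insertRow :
    (Nat.succAbove r i, j) ∈ s.insertRow r t ↔ (i, j) ∈ s := by
  simp [insertRow, (Nat.strictMono_succAbove r).injective.eq_iff, Nat.self_ne_succAbove]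

@[simp] lemma row_mem_insertRow : (r, j) ∈ s.insertRow r t ↔ j ∈ t := by
  simp [insertRow, Nat.succAbove_ne]

lemma card_insertRow : (s.insertRow r t).card = s.card + t.card := by
  rw [insertRow, card_union_of_disjoint, card_image_of_injective, card_image_of_injective]
  · exact Prod.mk_right_injective r
  · exact (Nat.strictMono_succAbove r).injective.prodMap Function.injective_id
  · simp only [disjoint_left, mem_image, Prod.map, id, not_exists, not_and]
    rintro _ ⟨⟨i, j⟩, -, rfl⟩ k - h
    exact Nat.self_ne_succAbove r i (Prod.ext_iff.1 h).1

lemma eraseRow_insertRow : (s.insertRow r t).eraseRow r = s := by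
  ext ⟨i, j⟩
  simp

lemma insertRow_eraseRow (h : ∀ j, (r, j) ∈ s ↔ j ∈ t) :
    (s.eraseRow r).insertRow r t = s := by
  ext p
  revert p
  rw [Nat.forall_prod_iff_succAbove r]
  simp [h]

end Finset

namespace YoungDiagram

variable {μ : YoungDiagram} {r c i j : ℕ}

noncomputable def eraseRow (μ : YoungDiagram) (r : ℕ) : YoungDiagram where
  cells := μ.cells.eraseRow r
  isLowerSet := by
    rw [Finset.eraseRow, Finset.coe_preimage]
    exact μ.isLowerSet.preimage ((Nat.strictMono_succAbove r).monotone.prodMap monotone_id)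

@[simp] lemma mem_eraseRow : (i, j) ∈ μ.eraseRow r ↔ (Nat.succAbove r i, j) ∈ μ :=
  Finset.mem_eraseRow

/-- Add a row of length `c + 1`; it goes right below the `μ.colLen c` rows longer than `c`. -/
def insertRow (μ : YoungDiagram) (c : ℕ) : YoungDiagram where
  cells := μ.cells.insertRow (μ.colLen c) (Finset.range (c + 1))
  isLowerSet := by
    rintro ⟨i, j⟩ ⟨i', j'⟩ hle hmem
    obtain ⟨hi, hj⟩ := Prod.mk_le_mk.1 hle
    simp only [Finset.mem_coe] at hmem ⊢
    obtain rfl | hir := eq_or_ne i (μ.colLen c) <;>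
      obtain rfl | hi'r := eq_or_ne i' (μ.colLen c)
    · simp only [Finset.row_mem_insertRow, Finset.mem_range] at hmem ⊢
      omega
    · obtain ⟨k', rfl⟩ := Nat.exists_succAbove_eq hi'r
      have hk' : k' < μ.colLen c :=
        Nat.succAbove_lt_iff.1 (lt_of_le_of_ne hi (Nat.succAbove_ne _ _))
      simp only [Finset.row_mem_insertRow, Finset.mem_range, Finset.succAbove_mem_insertRow,
        mem_cells] at hmem ⊢
      exact μ.up_left_mem le_rfl (by omega) (mem_iff_lt_colLen.2 hk')
    · obtain ⟨k, rfl⟩ := Nat.exists_succAbove_eq hir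
      simp only [Finset.row_mem_insertRow, Finset.mem_range, Finset.succAbove_mem_insertRow,
        mem_cells] at hmem ⊢
      by_contra hcj
      have hkc : (k, c) ∈ μ := μ.up_left_mem le_rfl (by omega) hmem
      exact not_lt.2 hi (Nat.succAbove_lt_iff.2 (mem_iff_lt_colLen.1 hkc))
    · obtain ⟨k, rfl⟩ := Nat.exists_succAbove_eq hir
      obtain ⟨k', rfl⟩ := Nat.exists_succAbove_eq hi'r
      simp only [Finset.succAbove_mem_insertRow, mem_cells] at hmem ⊢
      exact μ.up_left_mem ((Nat.strictMono_succAbove _).le_iff_le.1 hi) hj hmem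

@[simp] lemma succAbove_mem_insertRow :
    (Nat.succAbove (μ.colLen c) i, j) ∈ μ.insertRow c ↔ (i, j) ∈ μ :=
  Finset.succAbove_mem_insertRow

@[simp] lemma colLen_mem_insertRow : (μ.colLen c, j) ∈ μ.insertRow c ↔ j ≤ c := by
  simp [insertRow, ← mem_cells]

lemma colLen_eraseRow (h : (r, c) ∈ μ) (hb : (r + 1, c) ∉ μ) :
    (μ.eraseRow r).colLen c = r := by
  refine eq_of_forall_lt_iff fun i => ?_
  have hcol : ∀ k, (k, c) ∈ μ ↔ k ≤ r := fun k =>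
    ⟨fun hk => by by_contra! hrk; exact hb (μ.up_left_mem hrk le_rfl hk),
      fun hk => μ.up_left_mem hk le_rfl h⟩
  rw [← mem_iff_lt_colLen, mem_eraseRow, hcol, Nat.succAbove_le_iff]

lemma eraseRow_insertRow : (μ.insertRow c).eraseRow (μ.colLen c) = μ :=
  YoungDiagram.ext Finset.eraseRow_insertRow

lemma insertRow_eraseRow (h : (r, c) ∈ μ) (hb : (r + 1, c) ∉ μ) (hr : (r, c + 1) ∉ μ) :
    (μ.eraseRow r).insertRow c = μ := by
  refine YoungDiagram.ext ?_
  change (μ.cells.eraseRow r).insertRow ((μ.eraseRow r).colLen c) _ = _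
  rw [colLen_eraseRow h hb]
  refine Finset.insertRow_eraseRow fun j => ?_
  rw [mem_cells, Finset.mem_range, Nat.lt_succ_iff]
  exact ⟨fun hj => by by_contra! hcj; exact hr (μ.up_left_mem le_rfl hcj hj),
    fun hj => μ.up_left_mem le_rfl hj h⟩

variable (μ)

/-- Border edges are numbered `1, 2, …` from the South-West end. The horizontal edge under
column `j` comes after `j` horizontal and `μ.colLen 0 - μ.colLen j` vertical edges. -/
def colBorderIndex (j : ℕ) : ℕ := μ.colLen 0 - μ.colLen j + j + 1

/-- The vertical edge at the end of row `i` comes after `μ.rowLen i` horizontal and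
`μ.colLen 0 - (i + 1)` vertical edges. -/
def rowBorderIndex (i : ℕ) : ℕ := μ.colLen 0 - i + μ.rowLen i

lemma strictMono_colBorderIndex : StrictMono μ.colBorderIndex := by
  intro a b hab
  have := μ.colLen_anti a b hab.le
  have := μ.colLen_anti 0 a (Nat.zero_le a)
  unfold colBorderIndex
  omega

lemma strictAntiOn_rowBorderIndex : StrictAntiOn μ.rowBorderIndex (Set.Iio (μ.colLen 0)) := by
  intro a ha b _ hab
  have := μ.rowLen_anti a b hab.le
  rw [Set.mem_Iio] at ha
  unfold rowBorderIndex
  omega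

lemma colBorderIndex_ne_rowBorderIndex (hi : i < μ.colLen 0) :
    μ.colBorderIndex j ≠ μ.rowBorderIndex i := by
  have hmem : j < μ.rowLen i ↔ i < μ.colLen j := by
    rw [← mem_iff_lt_rowLen, mem_iff_lt_colLen]
  have := μ.colLen_anti 0 j (Nat.zero_le j)
  unfold colBorderIndex rowBorderIndex
  omega

lemma image_colBorderIndex_union_image_rowBorderIndex :
    (Finset.range (μ.rowLen 0)).image μ.colBorderIndex ∪
      (Finset.range (μ.colLen 0)).image μ.rowBorderIndex =
    Finset.Icc 1 (μ.colLen 0 + μ.rowLen 0) := by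
  refine Finset.eq_of_subset_of_card_le ?_ ?_
  · simp only [Finset.union_subset_iff, Finset.image_subset_iff, Finset.mem_range,
      Finset.mem_Icc]
    refine ⟨fun j hj => ?_, fun i hi => ?_⟩
    · have : 0 < μ.colLen j := mem_iff_lt_colLen.1 (mem_iff_lt_rowLen.2 hj)
      unfold colBorderIndex
      omega
    · have := μ.rowLen_anti 0 i (Nat.zero_le i)
      unfold rowBorderIndex
      omega
  · rw [Finset.card_union_of_disjoint,
      Finset.card_image_of_injective _ μ.strictMono_colBorderIndex.injective,
      Finset.card_image_of_injOn (μ.strictAntiOn_rowBorderIndex.injOn.mono (by simp)),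
      Nat.card_Icc, Finset.card_range, Finset.card_range]
    · omega
    · simp only [Finset.disjoint_left, Finset.mem_image, Finset.mem_range, not_exists, not_and]
      rintro _ ⟨j, -, rfl⟩ i hi
      exact (μ.colBorderIndex_ne_rowBorderIndex hi).symm

end YoungDiagram

namespace TreeLikeTableau

variable {T : TreeLikeTableau} {p : ℕ × ℕ} {i j k r c : ℕ}

@[ext] lemma ext {T₁ T₂ : TreeLikeTableau} (hs : T₁.shape = T₂.shape)
    (hp : T₁.points = T₂.points) : T₁ = T₂ := by
  cases T₁; cases T₂; congr

def rows (T : TreeLikeTableau) : ℕ := T.shape.colLen 0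

def cols (T : TreeLikeTableau) : ℕ := T.shape.rowLen 0

def HasPointAbove (T : TreeLikeTableau) (p : ℕ × ℕ) : Prop :=
  ∃ i < p.1, (i, p.2) ∈ T.points

def HasPointLeft (T : TreeLikeTableau) (p : ℕ × ℕ) : Prop :=
  ∃ j < p.2, (p.1, j) ∈ T.points

instance (T : TreeLikeTableau) : DecidablePred T.HasPointAbove :=
  fun _ => inferInstanceAs (Decidable (∃ _ < _, _))

instance (T : TreeLikeTableau) : DecidablePred T.HasPointLeft :=
  fun _ => inferInstanceAs (Decidable (∃ _ < _, _))

lemma mem_shape (hp : p ∈ T.points) : p ∈ T.shape := T.points_subset hp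

lemma not_hasPointLeft_of_hasPointAbove (hp : p ∈ T.points) (h : T.HasPointAbove p) :
    ¬T.HasPointLeft p := by
  have h0 : p ≠ (0, 0) := by
    rintro rfl
    obtain ⟨i, hi, -⟩ := h
    exact Nat.not_lt_zero i hi
  exact xor_iff_iff_not.1 (T.point_cond p hp h0) |>.1 h

def transpose (T : TreeLikeTableau) : TreeLikeTableau where
  shape := T.shape.transpose
  points := T.points.map (Equiv.prodComm ℕ ℕ).toEmbedding
  points_subset p hp := by
    rw [Finset.mem_map_equiv] at hp
    exact YoungDiagram.mem_transpose.2 (T.points_subset hp)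
  root_mem := Finset.mem_map_equiv.2 T.root_mem
  point_cond p hp h0 := by
    rw [Finset.mem_map_equiv] at hp
    have h : Xor (T.HasPointAbove p.swap) (T.HasPointLeft p.swap) :=
      T.point_cond _ hp (by simpa [Prod.ext_iff, and_comm] using h0)
    exact (xor_comm _ _).mp (by simpa [HasPointAbove, HasPointLeft, Finset.mem_map_equiv] using h)
  no_empty_row i j h := by
    obtain ⟨r, hr⟩ := T.no_empty_col j i (YoungDiagram.mem_transpose.1 h)
    exact ⟨r, Finset.mem_map_equiv.2 hr⟩
  no_empty_col i j h := by
    obtain ⟨c, hc⟩ := T.no_empty_row j i (YoungDiagram.mem_transpose.1 h)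
    exact ⟨c, Finset.mem_map_equiv.2 hc⟩

lemma transpose_points : T.transpose.points = T.points.map (Equiv.prodComm ℕ ℕ).toEmbedding :=
  rfl

@[simp] lemma mem_transpose_points : (i, j) ∈ T.transpose.points ↔ (j, i) ∈ T.points :=
  Finset.mem_map_equiv

lemma transpose_transpose (T : TreeLikeTableau) : T.transpose.transpose = T := by
  refine ext T.shape.transpose_transpose ?_
  ext ⟨i, j⟩
  simp

@[simp] lemma size_transpose : T.transpose.size = T.size := Finset.card_map _

@[simp] lemma rows_transpose : T.transpose.rows = T.cols := T.shape.colLen_transpose 0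

@[simp] lemma hasPointAbove_transpose : T.transpose.HasPointAbove p ↔ T.HasPointLeft p.swap := by
  simp [HasPointAbove, HasPointLeft]

@[simp] lemma hasPointLeft_transpose : T.transpose.HasPointLeft p ↔ T.HasPointAbove p.swap := by
  simp [HasPointAbove, HasPointLeft]

@[simp] lemma mem_occCorners_transpose :
    p ∈ T.transpose.occCorners ↔ p.swap ∈ T.occCorners := by
  obtain ⟨i, j⟩ := p
  simp [occCorners, transpose, YoungDiagram.mem_transpose, and_comm]

def transposeEquiv : TreeLikeTableau ≃ TreeLikeTableau :=
  Function.Involutive.toPerm transpose transpose_transpose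

@[simp] lemma transposeEquiv_apply : transposeEquiv T = T.transpose := rfl

lemma card_filter_not_hasPointLeft : {p ∈ T.points | ¬T.HasPointLeft p}.card = T.rows := by
  rw [rows, ← Finset.card_range (T.shape.colLen 0)]
  refine Finset.card_nbij Prod.fst (fun p hp => ?_) (fun p hp q hq hpq => ?_) (fun i hi => ?_)
  · simp only [Finset.mem_coe, Finset.mem_filter] at hp
    exact Finset.mem_range.2 <| YoungDiagram.mem_iff_lt_colLen.1 <|
      T.shape.up_left_mem le_rfl (Nat.zero_le _) (mem_shape hp.1)
  · simp only [Finset.mem_coe, Finset.mem_filter, HasPointLeft, not_exists, not_and] at hp hq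
    refine Prod.ext hpq (le_antisymm (not_lt.1 fun hlt => ?_) (not_lt.1 fun hlt => ?_))
    · exact hp.2 q.2 hlt (hpq ▸ hq.1)
    · exact hq.2 p.2 hlt (hpq ▸ hp.1)
  · have hrow : ∃ j, (i, j) ∈ T.points :=
      T.no_empty_row i 0 (YoungDiagram.mem_iff_lt_colLen.2 (Finset.mem_range.1 hi))
    refine ⟨(i, Nat.find hrow), ?_, rfl⟩
    simp only [Finset.mem_coe, Finset.mem_filter, HasPointLeft, not_exists, not_and]
    exact ⟨Nat.find_spec hrow, fun j hj => Nat.find_min hrow hj⟩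

lemma card_filter_not_hasPointAbove : {p ∈ T.points | ¬T.HasPointAbove p}.card = T.cols := by
  rw [← rows_transpose, ← card_filter_not_hasPointLeft, transpose_points, Finset.filter_map,
    Finset.card_map]
  congr 1
  exact Finset.filter_congr fun p _ => by simp

lemma rows_add_cols (T : TreeLikeTableau) : T.rows + T.cols = T.size + 1 := by
  have hroot : (0, 0) ∉ {p ∈ T.points | T.HasPointLeft p} := by
    rw [Finset.mem_filter]
    rintro ⟨-, j, hj, -⟩
    exact Nat.not_lt_zero j hj
  have habove : {p ∈ T.points | ¬T.HasPointAbove p} =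
      insert (0, 0) {p ∈ T.points | T.HasPointLeft p} := by
    ext p
    by_cases h0 : p = (0, 0)
    · subst h0
      simp [T.root_mem, HasPointAbove]
    · simp only [Finset.mem_filter, Finset.mem_insert, h0, false_or]
      exact and_congr_right fun hp => xor_iff_not_iff'.1 (T.point_cond p hp h0)
  rw [← card_filter_not_hasPointLeft, ← card_filter_not_hasPointAbove, habove,
    Finset.card_insert_of_notMem hroot, size,
    ← Finset.card_filter_add_card_filter_not (s := T.points) (T.HasPointLeft ·)]
  omega

lemma mem_Icc_iff_exists_borderIndex {m : ℕ} (hT : T.size = m) :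
    k ∈ Finset.Icc 1 (m + 1) ↔
      (∃ j < T.cols, T.shape.colBorderIndex j = k) ∨
        ∃ i < T.rows, T.shape.rowBorderIndex i = k := by
  rw [← hT, ← rows_add_cols, rows, cols,
    ← YoungDiagram.image_colBorderIndex_union_image_rowBorderIndex]
  simp

lemma mem_occCorners : p ∈ T.occCorners ↔
    p ∈ T.points ∧ (p.1 + 1, p.2) ∉ T.shape ∧ (p.1, p.2 + 1) ∉ T.shape := by
  simp [occCorners]

lemma ne_root_of_mem_occCorners (h : 2 ≤ T.size) (hp : p ∈ T.occCorners) : p ≠ (0, 0) := by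
  rintro rfl
  obtain ⟨-, hb, hr⟩ := mem_occCorners.1 hp
  have hsub : T.points ⊆ {(0, 0)} := by
    rintro ⟨i, j⟩ hq
    have hs := mem_shape hq
    rw [Finset.mem_singleton, Prod.mk.injEq]
    constructor
    · by_contra hi
      exact hb (T.shape.up_left_mem (Nat.one_le_iff_ne_zero.2 hi) (Nat.zero_le j) hs)
    · by_contra hj
      exact hr (T.shape.up_left_mem (Nat.zero_le i) (Nat.one_le_iff_ne_zero.2 hj) hs)
  have := Finset.card_le_card hsub
  rw [Finset.card_singleton] at this
  exact absurd h (by unfold size; omega)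

lemma hasPointAbove_or_hasPointLeft (h : 2 ≤ T.size) (hp : p ∈ T.occCorners) :
    T.HasPointAbove p ∨ T.HasPointLeft p :=
  Xor.or (T.point_cond p (mem_occCorners.1 hp).1 (ne_root_of_mem_occCorners h hp))

lemma eq_of_mem_row (hp : (r, c) ∈ T.occCorners) (ha : T.HasPointAbove (r, c))
    (hj : (r, j) ∈ T.points) : j = c := by
  obtain ⟨hmem, -, hright⟩ := mem_occCorners.1 hp
  obtain hjc | rfl | hcj := lt_trichotomy j c
  · exact absurd ⟨j, hjc, hj⟩ (not_hasPointLeft_of_hasPointAbove hmem ha)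
  · rfl
  · exact absurd (T.shape.up_left_mem le_rfl hcj (mem_shape hj)) hright

lemma forall_hasPointAbove_of_mem_occCorners (hp : (r, c) ∈ T.occCorners)
    (ha : T.HasPointAbove (r, c)) : ∀ j, (r, j) ∈ T.points → T.HasPointAbove (r, j) :=
  fun _ hj => eq_of_mem_row hp ha hj ▸ ha

lemma pos_of_forall_hasPointAbove (h : ∀ j, (r, j) ∈ T.points → T.HasPointAbove (r, j)) :
    0 < r := by
  by_contra! hr
  obtain rfl : r = 0 := Nat.le_zero.1 hr
  obtain ⟨i, hi, -⟩ := h 0 T.root_mem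
  exact Nat.not_lt_zero i hi

lemma exists_succAbove_mem_col (h : ∀ j, (r, j) ∈ T.points → T.HasPointAbove (r, j))
    (hk : (k, j) ∈ T.points) :
    ∃ i, Nat.succAbove r i ≤ k ∧ (Nat.succAbove r i, j) ∈ T.points := by
  obtain rfl | hkr := eq_or_ne k r
  · obtain ⟨i, hi, hmem⟩ := h j hk
    exact ⟨i, by rw [Nat.succAbove_of_lt hi]; exact hi.le, by rwa [Nat.succAbove_of_lt hi]⟩
  · obtain ⟨i, rfl⟩ := Nat.exists_succAbove_eq hkr
    exact ⟨i, le_rfl, hk⟩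

lemma exists_lt_mem_eraseRow_iff (h : ∀ j, (r, j) ∈ T.points → T.HasPointAbove (r, j)) :
    (∃ k < i, (k, j) ∈ T.points.eraseRow r) ↔ T.HasPointAbove (Nat.succAbove r i, j) := by
  refine ⟨fun ⟨k, hk, hm⟩ => ⟨_, Nat.strictMono_succAbove r hk, Finset.mem_eraseRow.1 hm⟩,
    fun ⟨k, hk, hm⟩ => ?_⟩
  obtain ⟨k', hle, hk'⟩ := exists_succAbove_mem_col h hm
  exact ⟨k', (Nat.strictMono_succAbove r).lt_iff_lt.1 (hle.trans_lt hk),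
    Finset.mem_eraseRow.2 hk'⟩

noncomputable def eraseRow (T : TreeLikeTableau) (r : ℕ)
    (h : ∀ j, (r, j) ∈ T.points → T.HasPointAbove (r, j)) : TreeLikeTableau where
  shape := T.shape.eraseRow r
  points := T.points.eraseRow r
  points_subset := fun ⟨_, _⟩ hp =>
    YoungDiagram.mem_eraseRow.2 (mem_shape (Finset.mem_eraseRow.1 hp))
  root_mem := by
    rw [Finset.mem_eraseRow, Nat.succAbove_of_lt (pos_of_forall_hasPointAbove h)]
    exact T.root_mem
  point_cond := by
    rintro ⟨i, j⟩ hp h0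
    rw [Finset.mem_eraseRow] at hp
    have h0' : (Nat.succAbove r i, j) ≠ (0, 0) := by
      simp only [ne_eq, Prod.mk.injEq] at h0 ⊢
      exact fun he => h0 ⟨Nat.le_zero.1 (he.1 ▸ Nat.le_succAbove r i), he.2⟩
    have left : (∃ c < j, (i, c) ∈ T.points.eraseRow r) ↔
        T.HasPointLeft (Nat.succAbove r i, j) := by
      simp [HasPointLeft]
    show Xor (∃ k < i, (k, j) ∈ T.points.eraseRow r) (∃ c < j, (i, c) ∈ T.points.eraseRow r)
    rw [exists_lt_mem_eraseRow_iff h, left]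
    exact T.point_cond _ hp h0'
  no_empty_row i j hij := by
    obtain ⟨c, hc⟩ := T.no_empty_row _ j (YoungDiagram.mem_eraseRow.1 hij)
    exact ⟨c, Finset.mem_eraseRow.2 hc⟩
  no_empty_col i j hij := by
    obtain ⟨k, hk⟩ := T.no_empty_col _ j (YoungDiagram.mem_eraseRow.1 hij)
    obtain ⟨k', -, hk'⟩ := exists_succAbove_mem_col h hk
    exact ⟨k', Finset.mem_eraseRow.2 hk'⟩

lemma lt_cols_eraseRow (h : ∀ j, (r, j) ∈ T.points → T.HasPointAbove (r, j))
    (hc : (r, c) ∈ T.points) : c < (T.eraseRow r h).cols := by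
  rw [cols, ← YoungDiagram.mem_iff_lt_rowLen]
  change (0, c) ∈ T.shape.eraseRow r
  rw [YoungDiagram.mem_eraseRow, Nat.succAbove_of_lt (pos_of_forall_hasPointAbove h)]
  exact T.shape.up_left_mem (Nat.zero_le r) le_rfl (mem_shape hc)

lemma exists_mem_col_lt_colLen (hc : c < T.cols) :
    ∃ k < T.shape.colLen c, (k, c) ∈ T.points := by
  obtain ⟨k, hk⟩ := T.no_empty_col 0 c (YoungDiagram.mem_iff_lt_rowLen.2 hc)
  exact ⟨k, YoungDiagram.mem_iff_lt_colLen.1 (mem_shape hk), hk⟩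

lemma exists_lt_colLen_mem_insertRow (hc : c < T.cols) :
    ∃ k < T.shape.colLen c, (k, c) ∈ T.points.insertRow (T.shape.colLen c) {c} := by
  obtain ⟨k, hk, hkc⟩ := exists_mem_col_lt_colLen hc
  refine ⟨k, hk, ?_⟩
  rwa [← Nat.succAbove_of_lt hk, Finset.succAbove_mem_insertRow]

lemma exists_lt_succAbove_mem_insertRow_iff (hj : (i, j) ∈ T.points) :
    (∃ k < Nat.succAbove (T.shape.colLen c) i,
        (k, j) ∈ T.points.insertRow (T.shape.colLen c) {c}) ↔ T.HasPointAbove (i, j) := by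
  refine ⟨fun ⟨k, hk, hm⟩ => ?_, fun ⟨k, hk, hm⟩ =>
    ⟨_, Nat.strictMono_succAbove _ hk, Finset.succAbove_mem_insertRow.2 hm⟩⟩
  obtain rfl | hkr := eq_or_ne k (T.shape.colLen c)
  · obtain rfl : j = c := by simpa using hm
    exact absurd (YoungDiagram.mem_iff_lt_colLen.1 (mem_shape hj))
      (mt Nat.succAbove_lt_iff.2 hk.not_gt)
  · obtain ⟨k', rfl⟩ := Nat.exists_succAbove_eq hkr
    exact ⟨k', (Nat.strictMono_succAbove _).lt_iff_lt.1 hk, Finset.succAbove_mem_insertRow.1 hm⟩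

def insertRow (T : TreeLikeTableau) (c : ℕ) (hc : c < T.cols) : TreeLikeTableau where
  shape := T.shape.insertRow c
  points := T.points.insertRow (T.shape.colLen c) {c}
  points_subset := by
    intro p
    revert p
    refine (Nat.forall_prod_iff_succAbove (T.shape.colLen c)).2
      ⟨fun j hj => ?_, fun i j hj => ?_⟩
    · simp_all
    · simpa using mem_shape (Finset.succAbove_mem_insertRow.1 hj)
  root_mem := by
    obtain ⟨k, hk, -⟩ := exists_mem_col_lt_colLen hc
    have := (Finset.succAbove_mem_insertRow (r := T.shape.colLen c) (t := {c})).2 T.root_mem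
    rwa [Nat.succAbove_of_lt (k.zero_le.trans_lt hk)] at this
  point_cond := by
    obtain ⟨k, hk, -⟩ := exists_mem_col_lt_colLen hc
    refine (Nat.forall_prod_iff_succAbove (T.shape.colLen c)).2
      ⟨fun j hj _ => ?_, fun i j hj h0 => ?_⟩
    · obtain rfl : j = c := by simpa using hj
      refine Or.inl ⟨exists_lt_colLen_mem_insertRow hc, fun ⟨j', hj', hm⟩ => ?_⟩
      simp only [Finset.row_mem_insertRow, Finset.mem_singleton] at hm
      omega
    rw [Finset.succAbove_mem_insertRow] at hj
    have h0' : (i, j) ≠ (0, 0) := by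
      rintro ⟨⟩
      simp [Nat.succAbove_of_lt (k.zero_le.trans_lt hk)] at h0
    have left : (∃ c' < j, (Nat.succAbove (T.shape.colLen c) i, c') ∈
        T.points.insertRow (T.shape.colLen c) {c}) ↔ T.HasPointLeft (i, j) := by
      simp [HasPointLeft]
    show Xor _ _
    rw [exists_lt_succAbove_mem_insertRow_iff hj, left]
    exact T.point_cond _ hj h0'
  no_empty_row := by
    refine (Nat.forall_iff_succAbove (T.shape.colLen c)).2
      ⟨fun _ _ => ⟨c, by simp⟩, fun i j h => ?_⟩
    obtain ⟨c', hc'⟩ := T.no_empty_row i j (by simpa using h)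
    exact ⟨c', Finset.succAbove_mem_insertRow.2 hc'⟩
  no_empty_col i j h := by
    have hcol : ∃ i', (i', j) ∈ T.shape := by
      revert i
      refine (Nat.forall_iff_succAbove (T.shape.colLen c)).2
        ⟨fun h => ?_, fun i h => ⟨i, ?_⟩⟩
      · exact ⟨0, T.shape.up_left_mem le_rfl (by simpa using h)
          (YoungDiagram.mem_iff_lt_rowLen.2 hc)⟩
      · simpa using h
    obtain ⟨i', hi'⟩ := hcol
    obtain ⟨k, hk⟩ := T.no_empty_col i' j hi'
    exact ⟨_, Finset.succAbove_mem_insertRow.2 hk⟩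

lemma size_insertRow (hc : c < T.cols) : (T.insertRow c hc).size = T.size + 1 := by
  simp [size, insertRow, Finset.card_insertRow]

lemma mem_occCorners_insertRow (hc : c < T.cols) :
    (T.shape.colLen c, c) ∈ (T.insertRow c hc).occCorners := by
  have hbelow : T.shape.colLen c + 1 = Nat.succAbove (T.shape.colLen c) (T.shape.colLen c) :=
    (if_neg (lt_irrefl _)).symm
  rw [mem_occCorners]
  refine ⟨by simp [insertRow], ?_, by simp [insertRow]⟩
  change (_, c) ∉ T.shape.insertRow c
  rw [hbelow, YoungDiagram.succAbove_mem_insertRow, YoungDiagram.mem_iff_lt_colLen]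
  exact lt_irrefl _

lemma hasPointAbove_insertRow (hc : c < T.cols) :
    (T.insertRow c hc).HasPointAbove (T.shape.colLen c, c) :=
  exists_lt_colLen_mem_insertRow hc

lemma eraseRow_insertRow (hc : c < T.cols)
    (h : ∀ j, (T.shape.colLen c, j) ∈ (T.insertRow c hc).points →
      (T.insertRow c hc).HasPointAbove (T.shape.colLen c, j)) :
    (T.insertRow c hc).eraseRow (T.shape.colLen c) h = T :=
  ext YoungDiagram.eraseRow_insertRow Finset.eraseRow_insertRow

lemma insertRow_eraseRow (hp : (r, c) ∈ T.occCorners)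
    (h : ∀ j, (r, j) ∈ T.points → T.HasPointAbove (r, j)) (hc : c < (T.eraseRow r h).cols) :
    (T.eraseRow r h).insertRow c hc = T := by
  obtain ⟨hmem, hb, hr⟩ := mem_occCorners.1 hp
  refine ext (YoungDiagram.insertRow_eraseRow (mem_shape hmem) hb hr) ?_
  change (T.points.eraseRow r).insertRow ((T.shape.eraseRow r).colLen c) {c} = T.points
  rw [YoungDiagram.colLen_eraseRow (mem_shape hmem) hb]
  refine Finset.insertRow_eraseRow fun j => ⟨fun hj => ?_, fun hj => ?_⟩
  · exact Finset.mem_singleton.2 (eq_of_mem_row hp (h c hmem) hj)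
  · exact Finset.mem_singleton.1 hj ▸ hmem

lemma size_eraseRow (hp : (r, c) ∈ T.occCorners)
    (h : ∀ j, (r, j) ∈ T.points → T.HasPointAbove (r, j)) :
    (T.eraseRow r h).size + 1 = T.size := by
  rw [← size_insertRow (lt_cols_eraseRow h (mem_occCorners.1 hp).1), insertRow_eraseRow hp]

noncomputable def occCornerEquiv {n : ℕ} (hn : 2 ≤ n) :
    {x : TreeLikeTableau × (ℕ × ℕ) // x.1.size = n ∧ x.2 ∈ x.1.occCorners} ≃
      {x : TreeLikeTableau × (ℕ × ℕ) //
          x.1.size = n ∧ x.2 ∈ x.1.occCorners ∧ x.1.HasPointAbove x.2} ⊕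
        {x : TreeLikeTableau × (ℕ × ℕ) //
          x.1.size = n ∧ x.2 ∈ x.1.occCorners ∧ x.1.HasPointLeft x.2} := by
  classical
  have hsplit : ∀ x : TreeLikeTableau × (ℕ × ℕ), x.1.size = n ∧ x.2 ∈ x.1.occCorners ↔
      (x.1.size = n ∧ x.2 ∈ x.1.occCorners ∧ x.1.HasPointAbove x.2) ∨
        (x.1.size = n ∧ x.2 ∈ x.1.occCorners ∧ x.1.HasPointLeft x.2) := fun x =>
    ⟨fun ⟨hT, hp⟩ =>
      (hasPointAbove_or_hasPointLeft (hT ▸ hn) hp).imp (⟨hT, hp, ·⟩) (⟨hT, hp, ·⟩),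
      by rintro (⟨hT, hp, -⟩ | ⟨hT, hp, -⟩) <;> exact ⟨hT, hp⟩⟩
  refine (Equiv.subtypeEquivRight hsplit).trans
    (subtypeOrEquiv _ _ (Pi.disjoint_iff.2 fun x => Prop.disjoint_iff.2 ?_))
  rintro ⟨⟨-, hp, ha⟩, -, -, hl⟩
  exact not_hasPointLeft_of_hasPointAbove (mem_occCorners.1 hp).1 ha hl

noncomputable def rowCornerEquiv (m : ℕ) :
    {x : TreeLikeTableau × (ℕ × ℕ) //
        x.1.size = m + 1 ∧ x.2 ∈ x.1.occCorners ∧ x.1.HasPointAbove x.2} ≃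
      {y : TreeLikeTableau × ℕ // y.1.size = m ∧ y.2 < y.1.cols} where
  toFun x :=
    have h := forall_hasPointAbove_of_mem_occCorners x.2.2.1 x.2.2.2
    ⟨(x.1.1.eraseRow _ h, x.1.2.2), Nat.add_right_cancel ((size_eraseRow x.2.2.1 h).trans x.2.1),
      lt_cols_eraseRow h (mem_occCorners.1 x.2.2.1).1⟩
  invFun y :=
    ⟨(y.1.1.insertRow y.1.2 y.2.2, (y.1.1.shape.colLen y.1.2, y.1.2)),
      by rw [size_insertRow, y.2.1], mem_occCorners_insertRow y.2.2,
      hasPointAbove_insertRow y.2.2⟩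
  left_inv x := by
    obtain ⟨hmem, hb, -⟩ := mem_occCorners.1 x.2.2.1
    have h := forall_hasPointAbove_of_mem_occCorners x.2.2.1 x.2.2.2
    exact Subtype.ext <| Prod.ext (insertRow_eraseRow x.2.2.1 h (lt_cols_eraseRow h hmem))
      (Prod.ext (YoungDiagram.colLen_eraseRow (mem_shape hmem) hb) rfl)
  right_inv y := Subtype.ext <| Prod.ext (eraseRow_insertRow y.2.2 <|
    forall_hasPointAbove_of_mem_occCorners (mem_occCorners_insertRow y.2.2)
      (hasPointAbove_insertRow y.2.2)) rfl

noncomputable def colCornerEquiv (m : ℕ) :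
    {x : TreeLikeTableau × (ℕ × ℕ) //
        x.1.size = m + 1 ∧ x.2 ∈ x.1.occCorners ∧ x.1.HasPointLeft x.2} ≃
      {y : TreeLikeTableau × ℕ // y.1.size = m ∧ y.2 < y.1.rows} :=
  ((transposeEquiv.prodCongr (Equiv.prodComm ℕ ℕ)).subtypeEquiv fun x => by simp).trans <|
    (rowCornerEquiv m).trans <|
      (transposeEquiv.prodCongr (Equiv.refl ℕ)).subtypeEquiv fun y => by simp

noncomputable def borderEdgeEquiv (m : ℕ) :
    {y : TreeLikeTableau × ℕ // y.1.size = m ∧ y.2 < y.1.cols} ⊕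
        {y : TreeLikeTableau × ℕ // y.1.size = m ∧ y.2 < y.1.rows} ≃
      {y : TreeLikeTableau × ℕ // y.1.size = m ∧ y.2 ∈ Finset.Icc 1 (m + 1)} := by
  refine Equiv.ofBijective
    (Sum.elim
      (fun y => ⟨(y.1.1, y.1.1.shape.colBorderIndex y.1.2), y.2.1,
        (mem_Icc_iff_exists_borderIndex y.2.1).2 (Or.inl ⟨_, y.2.2, rfl⟩)⟩)
      (fun y => ⟨(y.1.1, y.1.1.shape.rowBorderIndex y.1.2), y.2.1,
        (mem_Icc_iff_exists_borderIndex y.2.1).2 (Or.inr ⟨_, y.2.2, rfl⟩)⟩))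
    ⟨?_, ?_⟩
  · rintro (⟨⟨T, j⟩, _, _⟩ | ⟨⟨T, i⟩, _, hi⟩)
      (⟨⟨T', j'⟩, _, _⟩ | ⟨⟨T', i'⟩, _, hi'⟩) h <;>
      simp only [Sum.elim_inl, Sum.elim_inr, Subtype.mk.injEq, Prod.mk.injEq] at h <;>
      obtain ⟨rfl, h⟩ := h
    · obtain rfl := T.shape.strictMono_colBorderIndex.injective h
      rfl
    · exact absurd h (T.shape.colBorderIndex_ne_rowBorderIndex hi')
    · exact absurd h.symm (T.shape.colBorderIndex_ne_rowBorderIndex hi)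
    · obtain rfl := T.shape.strictAntiOn_rowBorderIndex.injOn hi hi' h
      rfl
  · rintro ⟨⟨T, k⟩, hT, hk⟩
    rcases (mem_Icc_iff_exists_borderIndex hT).1 hk with ⟨j, hj, hjk⟩ | ⟨i, hi, hik⟩
    · exact ⟨Sum.inl ⟨(T, j), hT, hj⟩, Subtype.ext (Prod.ext rfl hjk)⟩
    · exact ⟨Sum.inr ⟨(T, i), hT, hi⟩, Subtype.ext (Prod.ext rfl hik)⟩

end TreeLikeTableau

/-- There is a bijection between pairs `(T, occupied corner of T)` with `T` a
tree-like tableau of size `n`, and pairs `(T', i)` with `T'` a tree-like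
tableau of size `n - 1` and `i ∈ {1, …, n}`. -/
theorem occupied_corners_bijection (n : ℕ) (hn : 2 ≤ n) :
    Nonempty
      ({x : TreeLikeTableau × (ℕ × ℕ) // x.1.size = n ∧ x.2 ∈ x.1.occCorners} ≃
       {y : TreeLikeTableau × ℕ // y.1.size = n - 1 ∧ y.2 ∈ Finset.Icc 1 n}) := by
  obtain ⟨m, rfl⟩ : ∃ m, n = m + 1 := ⟨n - 1, by omega⟩
  exact ⟨(TreeLikeTableau.occCornerEquiv hn).trans <|
    ((TreeLikeTableau.rowCornerEquiv m).sumCongr (TreeLikeTableau.colCornerEquiv m)).trans <|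
      (TreeLikeTableau.borderEdgeEquiv m).trans <|
        Equiv.subtypeEquivRight fun y => by rw [Nat.add_sub_cancel]⟩
end

section
/- For 2 ≤ k ≤ n, the number of permutations σ of {1,...,n} satisfying: (1) σ(k-1) = σ(k)+1 or σ(k-1) < σ(k), and (2) σ(j) > σ(k)+1 for all k < j ≤ n, equals n!/((n-k+2)(n-k+1)) plus (n-1)! if k = n (and plus 0 otherwise). -/
/-!
Every injection `Fin (m + 2) ↪ Fin n` extends to exactly `(n - m - 2)!` permutations, so
restricting `σ` to the window of positions `k - 1, …, n` reduces the count to `(k - 2)!` times the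
number of admissible windows. Fix the window's second value `a = σ(k)` (0-based): then `σ(k - 1)`
is one of the `a` smaller values or `a + 1`, and the last `m = n - k` entries form an injection
into the `n - a - 2` values above `a + 1`. Summing `(a + [a + 1 < n]) · (n - a - 2)ₘ` over `a`
gives `m! · C(n, m + 2)` by an upper Vandermonde identity, plus the `n - 1` windows with
`a = n - 1` that exist only when `m = 0`.
-/

open Finset Fintype Equiv
open scoped Nat

section Restriction

variable {α β : Type*} [Fintype α] [DecidableEq α] [Fintype β]

theorem card_perm_trans_eq_self (e : β ↪ α) :
    #{σ : Perm α | e.trans σ.toEmbedding = e} = (card α - card β)! := by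
  have fixes : {σ : Perm α // e.trans σ.toEmbedding = e}
      ≃ {σ : Perm α // ∀ a, ¬(a ∉ Set.range e) → σ a = a} :=
    subtypeEquivRight fun σ => by simp [DFunLike.ext_iff]
  rw [← Fintype.card_subtype,
    Fintype.card_congr (fixes.trans (Perm.subtypeEquivSubtypePerm _).symm), card_perm,
    card_subtype_compl, Set.card_range_of_injective e.injective]

theorem card_perm_trans_eq (e f : β ↪ α) :
    #{σ : Perm α | e.trans σ.toEmbedding = f} = (card α - card β)! := by
  obtain ⟨σ₀, hσ₀⟩ := Perm.exists_extending_pair e f e.injective f.injective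
  rw [← card_perm_trans_eq_self e]
  refine card_nbij' (σ₀⁻¹ * ·) (σ₀ * ·) ?_ ?_ (fun σ _ => by group) (fun σ _ => by group) <;>
  · intro σ hσ
    simp only [coe_filter, mem_univ, true_and, Set.mem_ofPred_eq, DFunLike.ext_iff,
      Function.Embedding.trans_apply, coe_toEmbedding, Perm.mul_apply] at hσ ⊢
    intro b
    simp [hσ, ← hσ₀]

theorem card_filter_perm_trans (e : β ↪ α) (P : (β ↪ α) → Prop) [DecidablePred P] :
    #{σ : Perm α | P (e.trans σ.toEmbedding)} = #{f : β ↪ α | P f} * (card α - card β)! := by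
  rw [card_eq_sum_card_fiberwise (f := fun σ => e.trans σ.toEmbedding) (t := {f | P f})
    (fun σ hσ => by simpa using hσ)]
  refine sum_const_nat fun f hf => ?_
  rw [filter_filter, ← card_perm_trans_eq e f]
  congr 1
  ext σ
  simp only [mem_filter, mem_univ, true_and] at hf ⊢
  exact ⟨And.right, fun h => ⟨h ▸ hf, h⟩⟩

end Restriction

theorem sum_antidiagonal_choose_snd (N m : ℕ) :
    ∑ p ∈ antidiagonal N, p.2.choose m = (N + 1).choose (m + 1) := by
  induction N with
  | zero => cases m <;> simp [Nat.choose_eq_zero_of_lt]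
  | succ N ih => rw [Nat.sum_antidiagonal_succ, ih, Nat.choose_succ_succ' (N + 1)]

theorem sum_antidiagonal_succ_mul_choose (N m : ℕ) :
    ∑ p ∈ antidiagonal N, (p.1 + 1) * p.2.choose m = (N + 2).choose (m + 2) := by
  induction N with
  | zero => cases m <;> simp [Nat.choose_eq_zero_of_lt]
  | succ N ih =>
    simp only [Nat.sum_antidiagonal_succ, add_mul (_ + 1) 1, one_mul, sum_add_distrib, ih,
      sum_antidiagonal_choose_snd, zero_add]
    rw [Nat.choose_succ_succ' (N + 2), Nat.choose_succ_succ' (N + 1) m]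
    ring

theorem sum_range_add_ite_mul_descFactorial (N m : ℕ) :
    ∑ a ∈ range (N + 2), (a + if a + 1 < N + 2 then 1 else 0) * (N + 2 - a - 2).descFactorial m
      = m ! * (N + 2).choose (m + 2) + if m = 0 then N + 1 else 0 := by
  rw [sum_range_succ, ← sum_antidiagonal_succ_mul_choose, mul_sum,
    Nat.sum_antidiagonal_eq_sum_range_succ_mk]
  congr 1
  · refine sum_congr rfl fun a ha => ?_
    rw [mem_range] at ha
    rw [if_pos (by omega), Nat.descFactorial_eq_factorial_mul_choose,
      show N + 2 - a - 2 = N - a by omega]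
    ring
  · cases m <;> simp

theorem Fin.card_subtype_lt_val (n c : ℕ) :
    Fintype.card {w : Fin n // c < w.val} = n - (c + 1) := by
  have h := card_filter_add_card_filter_not (s := univ) (fun w : Fin n => w.val < c + 1)
  rw [Fin.card_filter_val_lt, card_univ, Fintype.card_fin] at h
  simp only [not_lt, Nat.succ_le_iff] at h
  rw [Fintype.card_subtype]
  omega

theorem Fin.card_subtype_eq_succ_or_lt {n : ℕ} (a : Fin n) :
    Fintype.card {b : Fin n // b.val = a.val + 1 ∨ b < a}
      = a + if a.val + 1 < n then 1 else 0 := by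
  rw [Fintype.card_subtype]
  split_ifs with h
  · have hset :
        ({b | b.val = a.val + 1 ∨ b < a} : Finset (Fin n)) = insert ⟨a + 1, h⟩ (Iio a) := by
      ext b
      simp only [mem_filter, mem_univ, true_and, mem_insert, mem_Iio, Fin.lt_def, Fin.ext_iff]
    rw [hset, card_insert_of_notMem (by simp [Fin.lt_def]), Fin.card_Iio]
  · have hset : ({b | b.val = a.val + 1 ∨ b < a} : Finset (Fin n)) = Iio a := by
      ext b
      simp only [mem_filter, mem_univ, true_and, mem_Iio]
      omega
    rw [hset, Fin.card_Iio, add_zero]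

/-- `f i` stands for `σ (k - 2 + i)`: the values of `σ` at the 1-based positions `k - 1, …, n`. -/
def IsCornerWindow {m n : ℕ} (f : Fin (m + 2) → Fin n) : Prop :=
  ((f 0).val = (f 1).val + 1 ∨ f 0 < f 1) ∧ ∀ i : Fin m, (f 1).val + 1 < (f i.succ.succ).val

instance {m n : ℕ} : DecidablePred (IsCornerWindow (m := m) (n := n)) :=
  fun _ => by unfold IsCornerWindow; infer_instance

section CornerWindow

variable {m n : ℕ}

def cornerWindowFiberEquiv (a : Fin n) :
    {f : Fin (m + 2) ↪ Fin n // IsCornerWindow f ∧ f 1 = a}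
      ≃ {b : Fin n // b.val = a.val + 1 ∨ b < a} × (Fin m ↪ {w : Fin n // a.val + 1 < w.val}) where
  toFun f :=
    (⟨f.1 0, by obtain ⟨f, hf, rfl⟩ := f; exact hf.1⟩,
      ⟨fun i => ⟨f.1 i.succ.succ, by obtain ⟨f, hf, rfl⟩ := f; exact hf.2 i⟩,
        fun i j h => by simpa using f.1.injective (congrArg Subtype.val h)⟩)
  invFun p :=
    ⟨⟨Fin.cons p.1.1 (Fin.cons a fun i => (p.2 i).1), by
      obtain ⟨⟨b, hb⟩, g⟩ := p
      have hg : ∀ i, a.val + 1 < (g i).val := fun i => (g i).2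
      simp only [Fin.cons_injective_iff, Fin.range_cons, Set.mem_insert_iff, Set.mem_range,
        not_or, not_exists, Fin.ext_iff]
      refine ⟨⟨by omega, fun i => by have := hg i; omega⟩, fun i => by have := hg i; omega,
        fun i j h => g.injective (Subtype.ext h)⟩⟩,
      by simp [IsCornerWindow, p.1.2, fun i => (p.2 i).2]⟩
  left_inv f := by
    obtain ⟨f, hf, rfl⟩ := f
    ext i
    exact Fin.cases rfl (Fin.cases rfl fun i => rfl) i
  right_inv p := rfl

theorem card_isCornerWindow_eq_sum :
    #{f : Fin (m + 2) ↪ Fin n | IsCornerWindow f}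
      = ∑ a ∈ range n, (a + if a + 1 < n then 1 else 0) * (n - a - 2).descFactorial m := by
  rw [card_eq_sum_card_fiberwise (f := fun f => f 1) (t := univ) (by simp),
    ← Fin.sum_univ_eq_sum_range]
  refine sum_congr rfl fun a _ => ?_
  rw [filter_filter, ← Fintype.card_subtype, Fintype.card_congr (cornerWindowFiberEquiv a),
    Fintype.card_prod, Fin.card_subtype_eq_succ_or_lt, Fintype.card_embedding_eq,
    Fintype.card_fin, Fin.card_subtype_lt_val]
  rfl

theorem card_isCornerWindow (N : ℕ) :
    #{f : Fin (m + 2) ↪ Fin (N + 2) | IsCornerWindow f}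
      = m ! * (N + 2).choose (m + 2) + if m = 0 then N + 1 else 0 := by
  rw [card_isCornerWindow_eq_sum, sum_range_add_ite_mul_descFactorial]

end CornerWindow

theorem factorial_mul_choose_add_two_mul_factorial (N m : ℕ) (hm : m ≤ N) :
    (m ! * (N + 2).choose (m + 2) * (N - m)! : ℚ) = (N + 2)! / ((m + 2) * (m + 1)) := by
  have h := Nat.choose_mul_factorial_mul_factorial (show m + 2 ≤ N + 2 by omega)
  rw [show N + 2 - (m + 2) = N - m by omega, Nat.factorial_succ, Nat.factorial_succ] at h
  rw [eq_div_iff (by positivity), ← h]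
  push_cast
  ring

/-- For `2 ≤ k ≤ n`, the number of permutations `σ` of `{1,…,n}` (here realized
as permutations of `Fin n`, with positions and values written 0-based) such that
(1) `σ(k-1) = σ(k) + 1` or `σ(k-1) < σ(k)`, and
(2) `σ(j) > σ(k) + 1` for all `k < j ≤ n`,
equals `n!/((n-k+2)(n-k+1))`, plus `(n-1)!` if `k = n`. -/
theorem count_permutations_corner_condition (n k : ℕ) (hk : 2 ≤ k) (hkn : k ≤ n) :
    ((Finset.univ.filter (fun σ : Equiv.Perm (Fin n) =>
        ((σ ⟨k - 2, by omega⟩).val = (σ ⟨k - 1, by omega⟩).val + 1 ∨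
          σ ⟨k - 2, by omega⟩ < σ ⟨k - 1, by omega⟩) ∧
        ∀ j : Fin n, k - 1 < j.val → (σ ⟨k - 1, by omega⟩).val + 1 < (σ j).val)).card : ℚ)
      = (n.factorial : ℚ) / (((n - k + 2 : ℕ) : ℚ) * ((n - k + 1 : ℕ) : ℚ))
        + (if k = n then ((n - 1).factorial : ℚ) else 0) := by
  obtain ⟨N, rfl⟩ : ∃ N, n = N + 2 := ⟨n - 2, by omega⟩
  let window : Fin (N + 2 - k + 2) ↪ Fin (N + 2) :=
    (Fin.natAddEmb (k - 2)).trans (Fin.castLEEmb (by omega))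
  have h0 : window 0 = ⟨k - 2, by omega⟩ := by ext; simp [window]
  have h1 : window 1 = ⟨k - 1, by omega⟩ := by ext; simp [window]; omega
  rw [filter_congr (q := fun σ => IsCornerWindow (window.trans σ.toEmbedding)) ?corner,
    card_filter_perm_trans window fun f => IsCornerWindow f, card_isCornerWindow,
    Fintype.card_fin, Fintype.card_fin, show N + 2 - (N + 2 - k + 2) = N - (N + 2 - k) by omega]
  · push_cast
    rw [add_mul, factorial_mul_choose_add_two_mul_factorial N _ (by omega)]
    congr 1
    by_cases hkN : k = N + 2
    · subst hkN
      simp [Nat.factorial_succ]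
    · simp [hkN, show N + 2 - k ≠ 0 by omega]
  case corner =>
    intro σ _
    simp only [IsCornerWindow, Function.Embedding.trans_apply, coe_toEmbedding, h0, h1]
    refine and_congr_right fun _ => ⟨fun h i => h _ ?_, fun h j hj => ?_⟩
    · simp [window]; omega
    · have hj' : window (⟨j - k, by omega⟩ : Fin (N + 2 - k)).succ.succ = j := by
        ext; simp [window]; omega
      exact hj' ▸ h _
end
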